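/- arXiv:math/9412203 — 2 statements merged into one kernel-verified Lean document; each statement's English description precedes it below -/
import Mathlib

section
/- Let H be a subgroup of F containing a normal subgroup N of F, let h ∈ N with h ≠ 1, and let m = l(h). Then for every Schreier transversal T of H and every i ≥ 0: Γ_T(i) ≤ m · r_T(i+m), where r_T(j) = 1 + (n−1)·Γ_T(j) − γ_T(j+1)/2. -/
open FreeGroup

/-- A Schreier transversal for a subgroup `H` of the free group on `Fin n`:
a set of representatives, exactly one for each right coset `Hg`, closed under
taking initial segments (prefixes) of reduced words. -/
def IsSchreierTransversal {n : ℕ} (H : Subgroup (FreeGroup (Fin n)))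
    (T : Set (FreeGroup (Fin n))) : Prop :=
  (∀ g : FreeGroup (Fin n), ∃! t, t ∈ T ∧ g * t⁻¹ ∈ H) ∧
  (∀ t ∈ T, ∀ k : ℕ, FreeGroup.mk ((FreeGroup.toWord t).take k) ∈ T)

/-- `Γ_T(i)`, the number of elements of the transversal `T` of length at most `i`. -/
noncomputable def GammaT {n : ℕ} (T : Set (FreeGroup (Fin n))) (i : ℕ) : ℕ :=
  Set.ncard {t ∈ T | FreeGroup.norm t ≤ i}

/-- `γ_T(i)`, the number of elements of the transversal `T` of length exactly `i`. -/
noncomputable def gammaT {n : ℕ} (T : Set (FreeGroup (Fin n))) (i : ℕ) : ℕ :=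
  Set.ncard {t ∈ T | FreeGroup.norm t = i}

/-- `r_T(i) = 1 + (n−1)·Γ_T(i) − γ_T(i+1)/2`. -/
noncomputable def rT (n : ℕ) (T : Set (FreeGroup (Fin n))) (i : ℕ) : ℚ :=
  1 + ((n : ℚ) - 1) * (GammaT T i : ℚ) - (gammaT T (i + 1) : ℚ) / 2

/-!
Call a pair `(v, x)` with `v ∈ T`, `|v| ≤ J` and `x` a letter an exit if `v x ∉ T`. As `T` is a
subtree of the Cayley tree of `F`, each of the `2n Γ_T(J)` pairs either is an exit, steps down to
the parent of `v` (`Γ_T(J) - 1` pairs), or steps up to a child of length `≤ J + 1`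
(`Γ_T(J + 1) - 1` pairs); so there are at most `2 r_T(J)` exits.

For `t ∈ T` and `1 ≠ g ∈ N` we have `H t g = H (t g t⁻¹) t = H t`, so `t g ∉ T`. Reading `h` or
`h⁻¹` letter by letter from any `t ∈ T` with `|t| ≤ i` therefore leaves `T` through an exit with
`|v| < i + m`. An exit `(u, x)` is met in this way by at most `m` of the `2 Γ_T(i)` readings, one
for each position of `h` carrying `x` or `x⁻¹`; hence `2 Γ_T(i) ≤ m · 2 r_T(i + m)`.
-/

theorem Set.ncard_le_ncard_add_one_of_sdiff_singleton_subset_image {β γ : Type*} {s : Set β}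
    {t : Set γ} {a : β} {f : γ → β} (ht : t.Finite) (h : s \ {a} ⊆ f '' t) :
    s.ncard ≤ t.ncard + 1 :=
  calc s.ncard ≤ (s \ {a}).ncard + ({a} : Set β).ncard := Set.ncard_le_ncard_sdiff_add_ncard _ _
    _ ≤ t.ncard + 1 := by
      rw [Set.ncard_singleton]
      gcongr
      exact (Set.ncard_le_ncard h (ht.image f)).trans (Set.ncard_image_le ht)

namespace FreeGroup

variable {α : Type*}

theorem getElem?_invRev (w : List (α × Bool)) {k : ℕ} (hk : k < w.length) :
    (invRev w)[k]? = w[w.length - 1 - k]?.map fun a => (a.1, !a.2) := by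
  simp [invRev, hk]

theorem mul_notMem_of_mem_normal {H N : Subgroup (FreeGroup α)} {T : Set (FreeGroup α)}
    (hT : ∀ g : FreeGroup α, ∃! t, t ∈ T ∧ g * t⁻¹ ∈ H) (hN : N.Normal) (hNH : N ≤ H)
    {t g : FreeGroup α} (ht : t ∈ T) (hg : g ∈ N) (hg1 : g ≠ 1) : t * g ∉ T := by
  intro htg
  have hsame : t * g = t :=
    (hT (t * g)).unique ⟨htg, by simp⟩ ⟨ht, hNH (by simpa [mul_assoc] using hN.conj_mem g hg t)⟩
  exact hg1 (mul_eq_left.1 hsame)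

theorem exists_mem_mul_mk_take_notMem {T : Set (FreeGroup α)} {t : FreeGroup α} (ht : t ∈ T)
    {w : List (α × Bool)} (hw : t * mk w ∉ T) :
    ∃ k x, w[k]? = some x ∧ t * mk (w.take k) ∈ T ∧ t * mk (w.take k) * mk [x] ∉ T := by
  suffices ∀ n ≤ w.length, t * mk (w.take n) ∉ T →
      ∃ k x, w[k]? = some x ∧ t * mk (w.take k) ∈ T ∧ t * mk (w.take k) * mk [x] ∉ T from
    this w.length le_rfl (by rwa [List.take_length])
  intro n hn hnT
  induction n with
  | zero => exact absurd (by simpa [← one_eq_mk] using ht) hnT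
  | succ n ih =>
    obtain ⟨x, hx⟩ : ∃ x, w[n]? = some x := ⟨w[n], List.getElem?_eq_getElem (by omega)⟩
    by_cases hmem : t * mk (w.take n) ∈ T
    · refine ⟨n, x, hx, hmem, ?_⟩
      rwa [mul_assoc, mul_mk, ← Option.toList_some, ← hx, ← List.take_add_one]
    · exact ih (by omega) hmem

/-- `(t, b)` reads `w` from `t` if `b` and `w⁻¹ = invRev w` if `¬b`; it reaches `(u, x)` when `u`
is `t` times a prefix of the word read and `x` is the next letter. -/
def ReadsTo (w : List (α × Bool)) (p : FreeGroup α × Bool) (e : FreeGroup α × (α × Bool)) :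
    Prop :=
  ∃ k, p.1 * mk ((cond p.2 w (invRev w)).take k) = e.1 ∧ (cond p.2 w (invRev w))[k]? = some e.2

variable [DecidableEq α]

theorem finite_setOf_norm_le [Finite α] (J : ℕ) : {x : FreeGroup α | norm x ≤ J}.Finite :=
  (List.finite_length_le _ J).preimage toWord_injective.injOn

theorem toWord_mk_of_prefix {x : FreeGroup α} {L : List (α × Bool)} (h : L <+: x.toWord) :
    (mk L).toWord = L := by
  rw [toWord_mk, (isReduced_toWord.infix h.isInfix).reduce_eq]

theorem exists_toWord_eq_append_singleton {x : FreeGroup α} (hx : x ≠ 1) :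
    ∃ L a, x.toWord = L ++ [a] := by
  rcases List.eq_nil_or_concat x.toWord with h | ⟨L, a, h⟩
  · exact absurd (toWord_eq_nil_iff.1 h) hx
  · exact ⟨L, a, by simpa using h⟩

theorem mul_mk_singleton_eq_of_toWord_eq {x : FreeGroup α} {L : List (α × Bool)}
    {a : α × Bool} (hx : x.toWord = L ++ [a]) : x * mk [(a.1, !a.2)] = mk L := by
  have hinv : mk [(a.1, !a.2)] = (mk [a])⁻¹ := by simp [inv_mk, invRev]
  rw [hinv, ← mk_toWord (x := x), hx, ← mul_mk, mul_inv_cancel_right]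

def IsPrefixClosed (T : Set (FreeGroup α)) : Prop :=
  ∀ t ∈ T, ∀ k : ℕ, mk (t.toWord.take k) ∈ T

theorem IsPrefixClosed.mk_mem {T : Set (FreeGroup α)} (hT : IsPrefixClosed T) {x : FreeGroup α}
    (hx : x ∈ T) {L : List (α × Bool)} (h : L <+: x.toWord) : mk L ∈ T := by
  rw [List.prefix_iff_eq_take.1 h]
  exact hT x hx _

theorem IsPrefixClosed.exists_mul_mem_of_ne_one {T : Set (FreeGroup α)} (hT : IsPrefixClosed T)
    {v : FreeGroup α} (hv : v ∈ T) (hv1 : v ≠ 1) :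
    ∃ x, v * mk [x] ∈ T ∧ v.toWord.getLast? = some (x.1, !x.2) := by
  obtain ⟨L, a, hL⟩ := exists_toWord_eq_append_singleton hv1
  refine ⟨(a.1, !a.2), ?_, by simp [hL]⟩
  rw [mul_mk_singleton_eq_of_toWord_eq hL]
  exact hT.mk_mem hv (hL ▸ List.prefix_append L [a])

theorem IsPrefixClosed.exists_parent {T : Set (FreeGroup α)} (hT : IsPrefixClosed T)
    {c : FreeGroup α} (hc : c ∈ T) (hc1 : c ≠ 1) :
    ∃ v x, v ∈ T ∧ norm v + 1 = norm c ∧ v * mk [x] = c ∧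
      v.toWord.getLast? ≠ some (x.1, !x.2) := by
  obtain ⟨L, a, hL⟩ := exists_toWord_eq_append_singleton hc1
  have hpre : L <+: c.toWord := hL ▸ List.prefix_append L [a]
  have hvL : (mk L).toWord = L := toWord_mk_of_prefix hpre
  refine ⟨mk L, a, hT.mk_mem hc hpre, ?_, ?_, ?_⟩
  · simp [norm, hvL, hL]
  · rw [mul_mk, ← hL, mk_toWord]
  · rw [hvL]
    intro hlast
    have hinfix : [(a.1, !a.2), a] <:+: c.toWord := by
      refine ⟨L.dropLast, [], ?_⟩
      rw [hL, ← List.dropLast_append_getLast? _ hlast]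
      simp
    simpa using (isReduced_toWord.infix hinfix : IsReduced [(a.1, !a.2), a])

def exits (T : Set (FreeGroup α)) (J : ℕ) : Set (FreeGroup α × (α × Bool)) :=
  {e | e.1 ∈ T ∧ norm e.1 ≤ J ∧ e.1 * mk [e.2] ∉ T}

theorem ncard_norm_le_succ [Finite α] (T : Set (FreeGroup α)) (J : ℕ) :
    {t ∈ T | norm t ≤ J + 1}.ncard
      = {t ∈ T | norm t ≤ J}.ncard + {t ∈ T | norm t = J + 1}.ncard := by
  simp_rw [Nat.le_add_one_iff, Set.sep_or]
  refine Set.ncard_union_eq (Set.disjoint_left.2 fun _ ⟨_, hle⟩ ⟨_, heq⟩ => by omega) ?_ ?_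
  · exact (finite_setOf_norm_le J).subset fun _ ht => ht.2
  · exact (finite_setOf_norm_le (J + 1)).subset fun _ ht => ht.2.le

theorem ncard_exits_add_le [Finite α] {T : Set (FreeGroup α)} (hT : IsPrefixClosed T) (J : ℕ) :
    (exits T J).ncard + {t ∈ T | norm t ≤ J + 1}.ncard + {t ∈ T | norm t ≤ J}.ncard
      ≤ 2 * Nat.card α * {t ∈ T | norm t ≤ J}.ncard + 2 := by
  set B := {t ∈ T | norm t ≤ J}
  set S := B ×ˢ (Set.univ : Set (α × Bool))
  set stay := S \ exits T J
  set down : Set (FreeGroup α × (α × Bool)) := {e | e.1.toWord.getLast? = some (e.2.1, !e.2.2)}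
  have hBfin : B.Finite := (finite_setOf_norm_le J).subset fun _ ht => ht.2
  have hSfin : S.Finite := hBfin.prod Set.finite_univ
  have hstayfin : stay.Finite := hSfin.subset Set.sdiff_subset
  have hS : S.ncard = B.ncard * (2 * Nat.card α) := by
    simp [S, Set.ncard_prod, Nat.card_prod, mul_comm]
  have hsplit : stay.ncard + (exits T J).ncard = S.ncard :=
    Set.ncard_sdiff_add_ncard_of_subset (fun e he => ⟨⟨he.1, he.2.1⟩, trivial⟩) hSfin
  have hdown : B.ncard ≤ (stay ∩ down).ncard + 1 := by
    refine Set.ncard_le_ncard_add_one_of_sdiff_singleton_subset_image (a := 1) (f := Prod.fst)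
      (hstayfin.inter_of_left _) ?_
    rintro v ⟨⟨hvT, hvJ⟩, hv1⟩
    obtain ⟨x, hxT, hlast⟩ := hT.exists_mul_mem_of_ne_one hvT hv1
    exact ⟨(v, x), ⟨⟨⟨⟨hvT, hvJ⟩, trivial⟩, fun he => he.2.2 hxT⟩, hlast⟩, rfl⟩
  have hup : {t ∈ T | norm t ≤ J + 1}.ncard ≤ (stay \ down).ncard + 1 := by
    refine Set.ncard_le_ncard_add_one_of_sdiff_singleton_subset_image (a := 1)
      (f := fun e => e.1 * mk [e.2]) hstayfin.sdiff ?_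
    rintro c ⟨⟨hcT, hcJ⟩, hc1⟩
    obtain ⟨v, x, hvT, hnorm, rfl, hlast⟩ := hT.exists_parent hcT hc1
    exact ⟨(v, x), ⟨⟨⟨⟨hvT, show norm v ≤ J by omega⟩, trivial⟩, fun he => he.2.2 hcT⟩, hlast⟩,
      rfl⟩
  have hstay := Set.ncard_inter_add_ncard_sdiff_eq_ncard stay down hstayfin
  linarith

theorem card_filter_readsTo_le (w : List (α × Bool)) (s : Finset (FreeGroup α × Bool))
    (e : FreeGroup α × (α × Bool)) [DecidablePred (ReadsTo w · e)] :
    {p ∈ s | ReadsTo w p e}.card ≤ w.length := by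
  -- position `j` of `w` carries `x` (when reading `w`) or `x⁻¹` (when reading `w⁻¹`), not both
  let g : ℕ → FreeGroup α × Bool := fun j =>
    if w[j]? = some e.2 then (e.1 * (mk (w.take j))⁻¹, true)
    else (e.1 * (mk ((invRev w).take (w.length - 1 - j)))⁻¹, false)
  suffices {p ∈ s | ReadsTo w p e} ⊆ (Finset.range w.length).image g from
    (Finset.card_le_card this).trans (Finset.card_image_le.trans (Finset.card_range _).le)
  rintro ⟨t, b⟩ hp
  obtain ⟨-, k, hu, hx⟩ := Finset.mem_filter.1 hp
  have hk : k < w.length := by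
    cases b <;> simpa [invRev] using (List.getElem?_eq_some_iff.1 hx).1
  cases b with
  | true =>
    refine Finset.mem_image.2 ⟨k, Finset.mem_range.2 hk, ?_⟩
    simp only [cond_true] at hu hx
    simp only [g, if_pos hx, ← hu, mul_inv_cancel_right]
  | false =>
    refine Finset.mem_image.2 ⟨w.length - 1 - k, Finset.mem_range.2 (by omega), ?_⟩
    simp only [cond_false] at hu hx
    rw [getElem?_invRev w hk] at hx
    obtain ⟨a, ha, hae⟩ := Option.map_eq_some_iff.1 hx
    have hidx : w.length - 1 - (w.length - 1 - k) = k := by omega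
    have hne : a ≠ (a.1, !a.2) := fun h => by simpa using congrArg Prod.snd h
    simp only [g, ha, ← hae, Option.some.injEq, if_neg hne, hidx, ← hu, mul_inv_cancel_right]

theorem two_mul_ncard_le_mul_ncard_exits [Finite α] {T : Set (FreeGroup α)}
    {w : List (α × Bool)} (hw : ∀ t ∈ T, t * mk w ∉ T ∧ t * (mk w)⁻¹ ∉ T) (i : ℕ) :
    2 * {t ∈ T | norm t ≤ i}.ncard ≤ w.length * (exits T (i + w.length)).ncard := by
  classical
  have hB : {t ∈ T | norm t ≤ i}.Finite := (finite_setOf_norm_le i).subset fun _ ht => ht.2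
  have hE : (exits T (i + w.length)).Finite :=
    ((finite_setOf_norm_le _).prod Set.finite_univ).subset fun _ he => ⟨he.2.1, trivial⟩
  have hreach : ∀ p ∈ hB.toFinset ×ˢ (Finset.univ : Finset Bool),
      1 ≤ (hE.toFinset.bipartiteAbove (ReadsTo w) p).card := by
    rintro ⟨t, b⟩ hp
    obtain ⟨htT, hti⟩ : t ∈ T ∧ norm t ≤ i := by simpa using hp
    set v := cond b w (invRev w)
    have hv : t * mk v ∉ T := by cases b <;> simp [v, hw t htT, ← inv_mk]
    have hlen : v.length = w.length := by cases b <;> simp [v, invRev_length]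
    obtain ⟨k, x, hx, hin, hout⟩ := exists_mem_mul_mk_take_notMem htT hv
    have hk : k < w.length := hlen ▸ (List.getElem?_eq_some_iff.1 hx).1
    have hnorm : norm (t * mk (v.take k)) ≤ i + w.length :=
      calc norm (t * mk (v.take k)) ≤ norm t + (v.take k).length :=
            (norm_mul_le _ _).trans (Nat.add_le_add_left norm_mk_le _)
        _ ≤ i + w.length := by simp only [List.length_take]; omega
    refine Finset.card_pos.2 ⟨(t * mk (v.take k), x), ?_⟩
    rw [Finset.mem_bipartiteAbove, Set.Finite.mem_toFinset]
    exact ⟨⟨hin, hnorm, hout⟩, k, rfl, hx⟩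
  have hcount := Finset.card_mul_le_card_mul (ReadsTo w) hreach
    fun e _ => card_filter_readsTo_le w _ e
  rw [Finset.card_product, Finset.card_univ, Fintype.card_bool,
    ← Set.ncard_eq_toFinset_card _ hB, ← Set.ncard_eq_toFinset_card _ hE] at hcount
  linarith

end FreeGroup

theorem gammaT_le_mul_rT_general {n : ℕ}
    (H N : Subgroup (FreeGroup (Fin n))) (hN : N.Normal) (hNH : N ≤ H)
    (h : FreeGroup (Fin n)) (hhN : h ∈ N) (hh1 : h ≠ 1)
    (T : Set (FreeGroup (Fin n))) (hT : IsSchreierTransversal H T) (i : ℕ) :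
    (GammaT T i : ℚ) ≤ (FreeGroup.norm h : ℚ) * rT n T (i + FreeGroup.norm h) := by
  obtain ⟨hrep, hpre⟩ := hT
  have hleave : ∀ t ∈ T, t * mk h.toWord ∉ T ∧ t * (mk h.toWord)⁻¹ ∉ T := fun t ht => by
    rw [mk_toWord]
    exact ⟨mul_notMem_of_mem_normal hrep hN hNH ht hhN hh1,
      mul_notMem_of_mem_normal hrep hN hNH ht (inv_mem hhN) (inv_ne_one.2 hh1)⟩
  have hcover : 2 * (GammaT T i : ℚ) ≤ norm h * (exits T (i + norm h)).ncard := by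
    exact_mod_cast two_mul_ncard_le_mul_ncard_exits hleave i
  have hexits : ((exits T (i + norm h)).ncard : ℚ) ≤ 2 * rT n T (i + norm h) := by
    have htree := ncard_exits_add_le hpre (i + norm h)
    rw [ncard_norm_le_succ, Nat.card_eq_fintype_card, Fintype.card_fin] at htree
    have htree' := (Nat.cast_le (α := ℚ)).2 htree
    push_cast at htree'
    unfold rT GammaT gammaT
    linarith
  calc (GammaT T i : ℚ) ≤ norm h * (exits T (i + norm h)).ncard / 2 := by
        linarith
    _ ≤ norm h * (2 * rT n T (i + norm h)) / 2 := by gcongr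
    _ = norm h * rT n T (i + norm h) := by ring

/-- If `H` contains a normal subgroup `N` of `F` and `1 ≠ h ∈ N` has length `m`,
then `Γ_T(i) ≤ m · r_T(i+m)` for every Schreier transversal `T` of `H`. -/
theorem gammaT_le_mul_rT {n : ℕ} (hn : 1 ≤ n)
    (H N : Subgroup (FreeGroup (Fin n))) (hN : N.Normal) (hNH : N ≤ H)
    (h : FreeGroup (Fin n)) (hhN : h ∈ N) (hh1 : h ≠ 1)
    (T : Set (FreeGroup (Fin n))) (hT : IsSchreierTransversal H T) (i : ℕ) :
    (GammaT T i : ℚ) ≤ (FreeGroup.norm h : ℚ) * rT n T (i + FreeGroup.norm h) :=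
  gammaT_le_mul_rT_general H N hN hNH h hhN hh1 T hT i
end

section
/- Let H₁ and H₂ be subgroups of F and let H = H₁ ∩ H₂. Then Γ_{F/H}(i) ≤ Γ_{F/H₁}(i) · Γ_{F/H₂}(i) for every i ≥ 0. -/
open FreeGroup

/-- The minimal length of a representative of the right coset `C` of `H`. -/
noncomputable def cosetMinLen {n : ℕ} (H : Subgroup (FreeGroup (Fin n)))
    (C : Quotient (QuotientGroup.rightRel H)) : ℕ :=
  sInf (FreeGroup.norm '' {g | Quotient.mk (QuotientGroup.rightRel H) g = C})

/-- The cogrowth function `Γ_{F/H}(i)`: the number of right cosets of `H`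
whose shortest representative has length at most `i`. -/
noncomputable def cogrowth {n : ℕ} (H : Subgroup (FreeGroup (Fin n))) (i : ℕ) : ℕ :=
  Nat.card {C : Quotient (QuotientGroup.rightRel H) // cosetMinLen H C ≤ i}

/-! Every coset of `H₁ ∩ H₂` is the intersection of the cosets of `H₁` and of `H₂` containing it,
and a shortest representative of it represents both of them, so recording these two cosets is an
injection from the cosets of `H₁ ∩ H₂` of minimal length `≤ i` into pairs of such cosets. -/

open QuotientGroup

section RightCosets

variable {G : Type*} [Group G]

def rightCosetMap {K H : Subgroup G} (h : K ≤ H) :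
    Quotient (rightRel K) → Quotient (rightRel H) :=
  Quotient.map' id fun _ _ hab => rightRel_apply.mpr (h (rightRel_apply.mp hab))

theorem rightCosetMap_inf_prod_injective (H₁ H₂ : Subgroup G) :
    Function.Injective fun C : Quotient (rightRel (H₁ ⊓ H₂)) =>
      (rightCosetMap inf_le_left C, rightCosetMap inf_le_right C) := by
  rintro ⟨a⟩ ⟨b⟩ h
  obtain ⟨h₁, h₂⟩ := Prod.ext_iff.mp h
  exact Quotient.sound (rightRel_apply.mpr
    ⟨rightRel_apply.mp (Quotient.exact h₁), rightRel_apply.mp (Quotient.exact h₂)⟩)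

end RightCosets

theorem FreeGroup.finite_setOf_norm_le_s16 {α : Type*} [Finite α] [DecidableEq α] (i : ℕ) :
    {g : FreeGroup α | g.norm ≤ i}.Finite :=
  (List.finite_length_le _ i).preimage toWord_injective.injOn

section CosetMinLen

variable {n : ℕ}

theorem exists_mk_norm_eq_cosetMinLen (H : Subgroup (FreeGroup (Fin n)))
    (C : Quotient (rightRel H)) : ∃ g, Quotient.mk _ g = C ∧ g.norm = cosetMinLen H C := by
  obtain ⟨g, hg⟩ := C.exists_rep
  exact Nat.sInf_mem (s := FreeGroup.norm '' {g | Quotient.mk _ g = C}) ⟨_, g, hg, rfl⟩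

theorem cosetMinLen_mk_le (H : Subgroup (FreeGroup (Fin n))) (g : FreeGroup (Fin n)) :
    cosetMinLen H (Quotient.mk _ g) ≤ g.norm :=
  Nat.sInf_le ⟨g, rfl, rfl⟩

theorem cosetMinLen_rightCosetMap_le {K H : Subgroup (FreeGroup (Fin n))} (h : K ≤ H)
    (C : Quotient (rightRel K)) : cosetMinLen H (rightCosetMap h C) ≤ cosetMinLen K C := by
  obtain ⟨g, rfl, hg⟩ := exists_mk_norm_eq_cosetMinLen K C
  exact hg ▸ cosetMinLen_mk_le H g

theorem finite_cosetMinLen_le (H : Subgroup (FreeGroup (Fin n))) (i : ℕ) :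
    Finite {C : Quotient (rightRel H) // cosetMinLen H C ≤ i} := by
  refine Set.Finite.to_subtype (((finite_setOf_norm_le_s16 i).image (Quotient.mk _)).subset ?_)
  intro C hC
  obtain ⟨g, hgC, hg⟩ := exists_mk_norm_eq_cosetMinLen H C
  exact ⟨g, (hg.trans_le hC : g.norm ≤ i), hgC⟩

end CosetMinLen

theorem cogrowth_inter_le_general {n : ℕ}
    (H₁ H₂ : Subgroup (FreeGroup (Fin n))) (i : ℕ) :
    cogrowth (H₁ ⊓ H₂) i ≤ cogrowth H₁ i * cogrowth H₂ i := by
  -- `Nat.card` is `0` on infinite types, so the injection below needs a finite target.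
  have := finite_cosetMinLen_le H₁ i
  have := finite_cosetMinLen_le H₂ i
  let f (C : {C // cosetMinLen (H₁ ⊓ H₂) C ≤ i}) :
      {C // cosetMinLen H₁ C ≤ i} × {C // cosetMinLen H₂ C ≤ i} :=
    (⟨rightCosetMap inf_le_left C.1, (cosetMinLen_rightCosetMap_le _ _).trans C.2⟩,
      ⟨rightCosetMap inf_le_right C.1, (cosetMinLen_rightCosetMap_le _ _).trans C.2⟩)
  have hf : f.Injective := fun C D h =>
    Subtype.ext (rightCosetMap_inf_prod_injective H₁ H₂
      (Prod.ext (congrArg (·.1.1) h) (congrArg (·.2.1) h)))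
  calc cogrowth (H₁ ⊓ H₂) i
      ≤ Nat.card ({C // cosetMinLen H₁ C ≤ i} × {C // cosetMinLen H₂ C ≤ i}) :=
        Nat.card_le_card_of_injective f hf
    _ = cogrowth H₁ i * cogrowth H₂ i := Nat.card_prod _ _

/-- Cogrowth of an intersection: `Γ_{F/(H₁ ∩ H₂)}(i) ≤ Γ_{F/H₁}(i) · Γ_{F/H₂}(i)`. -/
theorem cogrowth_inter_le {n : ℕ} (hn : 1 ≤ n)
    (H₁ H₂ : Subgroup (FreeGroup (Fin n))) (i : ℕ) :
    cogrowth (H₁ ⊓ H₂) i ≤ cogrowth H₁ i * cogrowth H₂ i :=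
  cogrowth_inter_le_general H₁ H₂ i
end
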